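/- For every C > 0 there exists a compact operator T on ℓ^2(ℕ) with Bowen topological entropy h_top(T) > C; in particular compact operators can have arbitrarily large (finite) positive entropy despite never being hypercyclic. -/

import Mathlib

/-!
Take `T x = φ(x) • w` on `ℓ²(ℕ)`, where `φ` is the 0-th coordinate and `w = L e₀`, so that
`T^[i+1] x = (L ^ i * φ x) • w`. On the compact disc `{c • w : ‖c‖ ≤ 1}` the points
`(k / L ^ n) • w`, `k ≤ L ^ n`, are mapped by `T^[n]` to `k • w`, so they are
`(n + 1, ‖w‖ / 2)`-separated and the entropy is at least `log L`. Conversely, two points of a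
compact set lying in a common `ε/2`-ball of a finite net and whose `φ`-values lie in a common
square of side `≍ ε L⁻ⁿ` are not `(n, ε)`-separated; as `φ` takes values in `ℂ ≅ ℝ²` this
leaves `O(L ^ (2 n))` separated points, so the entropy is at most `2 log L`. Choosing
`log L > C` gives the entropy bounds, and since every `T^[n] x` with `n ≥ 1` lies in the closed
kernel of the first coordinate, no orbit is dense.
-/

open Filter Topology

section Defs
variable {Y : Type*} [PseudoMetricSpace Y]

/-- A finite set `E` is `(n, ε)`-separated for the map `f`. -/
def IsSep (f : Y → Y) (n : ℕ) (ε : ℝ) (E : Finset Y) : Prop :=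
  ∀ x ∈ E, ∀ y ∈ E, x ≠ y → ∃ i < n, ε < dist (f^[i] x) (f^[i] y)

/-- Maximal cardinality of an `(n, ε)`-separated subset of `K`. -/
noncomputable def sepNum (f : Y → Y) (K : Set Y) (n : ℕ) (ε : ℝ) : ℕ :=
  sSup {m : ℕ | ∃ E : Finset Y, ↑E ⊆ K ∧ IsSep f n ε E ∧ E.card = m}

/-- Bowen topological entropy of a (uniformly continuous) map on a metric space. -/
noncomputable def entBowen (f : Y → Y) : EReal :=
  ⨆ (K : Set Y) (_ : IsCompact K) (ε : ℝ) (_ : 0 < ε),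
    limsup (fun n : ℕ => ((Real.log (sepNum f K n ε) / n : ℝ) : EReal)) atTop
end Defs

section Separated

variable {Y : Type*} [PseudoMetricSpace Y] {f : Y → Y} {K : Set Y} {n : ℕ} {ε : ℝ}

lemma IsSep.card_le_card_mul_card {β : Type*} [DecidableEq β] {t : Finset Y}
    (ht : ∀ x ∈ K, ∃ p ∈ t, dist x p < ε / 2) {F : Y → β} {S : Finset β}
    (hFS : ∀ x ∈ K, F x ∈ S)
    (hF : ∀ x ∈ K, ∀ y ∈ K, F x = F y → ∀ i, 0 < i → i < n → dist (f^[i] x) (f^[i] y) ≤ ε)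
    {s : Finset Y} (hsK : ↑s ⊆ K) (hs : IsSep f n ε s) : s.card ≤ t.card * S.card := by
  classical
  choose! net hnet_mem hnet_dist using ht
  have hmaps : ∀ x ∈ s, (net x, F x) ∈ t ×ˢ S := fun x hx =>
    Finset.mem_product.2 ⟨hnet_mem x (hsK hx), hFS x (hsK hx)⟩
  have hinj : Set.InjOn (fun x => (net x, F x)) s := by
    intro x hx y hy hxy
    obtain ⟨hnet, hF_eq⟩ : net x = net y ∧ F x = F y := Prod.ext_iff.1 hxy
    by_contra hne
    obtain ⟨i, hin, hi⟩ := hs x hx y hy hne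
    rcases Nat.eq_zero_or_pos i with rfl | hi0
    · have hx' := hnet_dist x (hsK hx)
      have hy' := hnet_dist y (hsK hy)
      rw [hnet] at hx'
      have := dist_triangle_right x y (net y)
      simp only [Function.iterate_zero, id_eq] at hi
      linarith
    · exact (hF x (hsK hx) y (hsK hy) hF_eq i hi0 hin).not_gt hi
  calc s.card ≤ (t ×ˢ S).card := Finset.card_le_card_of_injOn _ hmaps hinj
    _ = t.card * S.card := Finset.card_product t S

lemma bddAbove_card_isSep {M : ℝ}
    (hM : ∀ s : Finset Y, ↑s ⊆ K → IsSep f n ε s → (s.card : ℝ) ≤ M) :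
    BddAbove {m : ℕ | ∃ s : Finset Y, ↑s ⊆ K ∧ IsSep f n ε s ∧ s.card = m} :=
  ⟨⌊M⌋₊, by rintro _ ⟨s, hsK, hs, rfl⟩; exact Nat.le_floor (hM s hsK hs)⟩

lemma sepNum_le {M : ℝ} (hM : ∀ s : Finset Y, ↑s ⊆ K → IsSep f n ε s → (s.card : ℝ) ≤ M) :
    (sepNum f K n ε : ℝ) ≤ M := by
  have hne : {m : ℕ | ∃ s : Finset Y, ↑s ⊆ K ∧ IsSep f n ε s ∧ s.card = m}.Nonempty :=
    ⟨0, ∅, by simp, by simp [IsSep], rfl⟩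
  obtain ⟨s, hsK, hs, hcard⟩ := Nat.sSup_mem hne (bddAbove_card_isSep hM)
  rw [sepNum, ← hcard]
  exact hM s hsK hs

lemma card_le_sepNum {M : ℝ}
    (hM : ∀ s : Finset Y, ↑s ⊆ K → IsSep f n ε s → (s.card : ℝ) ≤ M)
    {s : Finset Y} (hsK : ↑s ⊆ K) (hs : IsSep f n ε s) : s.card ≤ sepNum f K n ε :=
  le_csSup (bddAbove_card_isSep hM) ⟨s, hsK, hs, rfl⟩

lemma le_entBowen (hK : IsCompact K) (hε : 0 < ε) :
    limsup (fun n : ℕ => ((Real.log (sepNum f K n ε) / n : ℝ) : EReal)) atTop ≤ entBowen f :=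
  le_iSup₂_of_le K hK (le_iSup₂_of_le ε hε le_rfl)

lemma entBowen_le {c : EReal}
    (h : ∀ K : Set Y, IsCompact K → ∀ ε : ℝ, 0 < ε →
      limsup (fun n : ℕ => ((Real.log (sepNum f K n ε) / n : ℝ) : EReal)) atTop ≤ c) :
    entBowen f ≤ c :=
  iSup₂_le fun K hK => iSup₂_le fun ε hε => h K hK ε hε

end Separated

section GrowthRate

lemma tendsto_const_div_add_ereal (b c : ℝ) :
    Tendsto (fun n : ℕ => ((b / n + c : ℝ) : EReal)) atTop (𝓝 (c : EReal)) := by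
  rw [EReal.tendsto_coe]
  simpa using (tendsto_const_div_atTop_nhds_zero_nat b).add_const c

lemma limsup_log_div_le_of_le_mul_pow {N : ℕ → ℕ} {P a : ℝ} (ha : 1 ≤ a)
    (hN : ∀ n, (N n : ℝ) ≤ P * a ^ n) :
    limsup (fun n : ℕ => ((Real.log (N n) / n : ℝ) : EReal)) atTop ≤ (Real.log a : EReal) := by
  set P' := max P 1
  have hlog : ∀ n, Real.log (N n) ≤ Real.log P' + n * Real.log a := by
    intro n
    have hrhs : 0 ≤ Real.log P' + n * Real.log a :=
      add_nonneg (Real.log_nonneg (le_max_right _ _))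
        (mul_nonneg n.cast_nonneg (Real.log_nonneg ha))
    rcases (N n).eq_zero_or_pos with h0 | hpos
    · simpa [h0] using hrhs
    calc Real.log (N n) ≤ Real.log (P' * a ^ n) :=
          Real.log_le_log (by exact_mod_cast hpos)
            ((hN n).trans (by gcongr; exact le_max_left _ _))
      _ = Real.log P' + n * Real.log a := by
          rw [Real.log_mul (by positivity) (by positivity), Real.log_pow]
  have hev : ∀ᶠ n : ℕ in atTop,
      ((Real.log (N n) / n : ℝ) : EReal) ≤ ((Real.log P' / n + Real.log a : ℝ) : EReal) := by
    filter_upwards [eventually_gt_atTop 0] with n hn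
    have hn' : (0 : ℝ) < n := by exact_mod_cast hn
    rw [EReal.coe_le_coe_iff, div_add' _ _ _ hn'.ne']
    exact div_le_div_of_nonneg_right (by linarith [hlog n]) hn'.le
  exact (limsup_le_limsup hev).trans (tendsto_const_div_add_ereal _ _).limsup_eq.le

lemma log_le_limsup_log_div_of_mul_pow_le {N : ℕ → ℕ} {c a : ℝ} (hc : 0 < c) (ha : 0 < a)
    (hN : ∀ᶠ n in atTop, c * a ^ n ≤ N n) :
    (Real.log a : EReal) ≤ limsup (fun n : ℕ => ((Real.log (N n) / n : ℝ) : EReal)) atTop := by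
  have hev : ∀ᶠ n : ℕ in atTop,
      ((Real.log c / n + Real.log a : ℝ) : EReal) ≤ ((Real.log (N n) / n : ℝ) : EReal) := by
    filter_upwards [hN, eventually_gt_atTop 0] with n hcN hn
    have hn' : (0 : ℝ) < n := by exact_mod_cast hn
    have hlog : Real.log c + n * Real.log a ≤ Real.log (N n) := by
      calc Real.log c + n * Real.log a = Real.log (c * a ^ n) := by
            rw [Real.log_mul hc.ne' (by positivity), Real.log_pow]
        _ ≤ Real.log (N n) := Real.log_le_log (by positivity) hcN
    rw [EReal.coe_le_coe_iff, div_add' _ _ _ hn'.ne']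
    exact div_le_div_of_nonneg_right (by linarith) hn'.le
  exact (tendsto_const_div_add_ereal _ _).limsup_eq.ge.trans (limsup_le_limsup hev)

end GrowthRate

section Grid

noncomputable def gridCell (h : ℝ) (z : ℂ) : ℤ × ℤ := (⌊z.re / h⌋, ⌊z.im / h⌋)

noncomputable def gridCells (h R : ℝ) : Finset (ℤ × ℤ) :=
  Finset.Icc ⌊-R / h⌋ ⌊R / h⌋ ×ˢ Finset.Icc ⌊-R / h⌋ ⌊R / h⌋

variable {h : ℝ}

lemma abs_sub_lt_of_floor_div_eq (hh : 0 < h) {a b : ℝ} (hab : ⌊a / h⌋ = ⌊b / h⌋) :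
    |a - b| < h := by
  have ha := Int.floor_le (a / h)
  have ha' := Int.lt_floor_add_one (a / h)
  have hb := Int.floor_le (b / h)
  have hb' := Int.lt_floor_add_one (b / h)
  rw [hab] at ha ha'
  have : |a / h - b / h| < 1 := abs_sub_lt_iff.2 ⟨by linarith, by linarith⟩
  rwa [← sub_div, abs_div, abs_of_pos hh, div_lt_one hh] at this

lemma norm_sub_lt_of_gridCell_eq (hh : 0 < h) {z w : ℂ} (hzw : gridCell h z = gridCell h w) :
    ‖z - w‖ < 2 * h := by
  obtain ⟨hre, him⟩ := Prod.ext_iff.1 hzw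
  calc ‖z - w‖ ≤ |(z - w).re| + |(z - w).im| := Complex.norm_le_abs_re_add_abs_im _
    _ < h + h := add_lt_add (abs_sub_lt_of_floor_div_eq hh hre) (abs_sub_lt_of_floor_div_eq hh him)
    _ = 2 * h := (two_mul h).symm

lemma gridCell_mem_gridCells (hh : 0 < h) {R : ℝ} {z : ℂ} (hz : ‖z‖ ≤ R) :
    gridCell h z ∈ gridCells h R := by
  have hmem : ∀ a : ℝ, |a| ≤ R → ⌊a / h⌋ ∈ Finset.Icc ⌊-R / h⌋ ⌊R / h⌋ := fun a ha =>
    Finset.mem_Icc.2 ⟨Int.floor_mono (by gcongr; exact (abs_le.1 ha).1),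
      Int.floor_mono (by gcongr; exact (abs_le.1 ha).2)⟩
  exact Finset.mem_product.2 ⟨hmem _ ((Complex.abs_re_le_norm z).trans hz),
    hmem _ ((Complex.abs_im_le_norm z).trans hz)⟩

lemma card_gridCells_le (hh : 0 < h) {R : ℝ} (hR : 0 ≤ R) :
    ((gridCells h R).card : ℝ) ≤ (2 * R / h + 2) ^ 2 := by
  have hle : ⌊-R / h⌋ ≤ ⌊R / h⌋ + 1 :=
    (Int.floor_mono (by gcongr; linarith)).trans (Int.le_add_one le_rfl)
  have hcard : ((Finset.Icc ⌊-R / h⌋ ⌊R / h⌋).card : ℝ) ≤ 2 * R / h + 2 := by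
    have hcast : ((Finset.Icc ⌊-R / h⌋ ⌊R / h⌋).card : ℝ) = ⌊R / h⌋ + 1 - ⌊-R / h⌋ := by
      exact_mod_cast Int.card_Icc_of_le _ _ hle
    have h1 := Int.floor_le (R / h)
    have h2 := Int.sub_one_lt_floor (-R / h)
    rw [hcast]
    linarith [show -R / h = -(R / h) by ring, show 2 * R / h = 2 * (R / h) by ring]
  rw [gridCells, Finset.card_product, Nat.cast_mul, ← sq]
  gcongr

end Grid

namespace ContinuousLinearMap

variable {𝕜 E : Type*} [NormedField 𝕜] [SeminormedAddCommGroup E] [NormedSpace 𝕜 E]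
  (φ : E →L[𝕜] 𝕜) (w : E)

lemma smulRight_iterate_smul (i : ℕ) (c : 𝕜) :
    (φ.smulRight w)^[i] (c • w) = (φ w ^ i * c) • w := by
  induction i generalizing c with
  | zero => simp
  | succ i ih =>
    rw [Function.iterate_succ_apply, smulRight_apply, map_smul, smul_eq_mul, ih, pow_succ]
    congr 1
    ring

lemma smulRight_iterate_succ_apply (i : ℕ) (x : E) :
    (φ.smulRight w)^[i + 1] x = (φ w ^ i * φ x) • w := by
  rw [Function.iterate_succ_apply, smulRight_apply, smulRight_iterate_smul]

lemma dist_smulRight_iterate_succ (i : ℕ) (x y : E) :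
    dist ((φ.smulRight w)^[i + 1] x) ((φ.smulRight w)^[i + 1] y) =
      ‖φ w‖ ^ i * ‖φ x - φ y‖ * ‖w‖ := by
  rw [smulRight_iterate_succ_apply, smulRight_iterate_succ_apply, dist_eq_norm, ← sub_smul,
    ← mul_sub, norm_smul, norm_mul, norm_pow]

end ContinuousLinearMap

section RankOneEntropy

open ContinuousLinearMap

variable {E : Type*} [NormedAddCommGroup E] [NormedSpace ℂ E] (φ : E →L[ℂ] ℂ) (w : E)

lemma card_isSep_smulRight_le (hφw : 1 ≤ ‖φ w‖) {K : Set E} (hK : IsCompact K) {ε : ℝ}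
    (hε : 0 < ε) : ∃ P : ℝ, ∀ (n : ℕ) (s : Finset E), ↑s ⊆ K → IsSep (φ.smulRight w) n ε s →
      (s.card : ℝ) ≤ P * (‖φ w‖ ^ 2) ^ n := by
  classical
  set L := ‖φ w‖
  have hw : 0 < ‖w‖ := norm_pos_iff.2 fun h => by simp [L, h] at hφw; linarith
  obtain ⟨t, -, htfin, htK⟩ := hK.finite_cover_balls (half_pos hε)
  have ht : ∀ x ∈ K, ∃ p ∈ htfin.toFinset, dist x p < ε / 2 := fun x hx => by
    simpa using htK hx
  obtain ⟨R, hR, hφR⟩ := (hK.image φ.continuous).isBounded.exists_pos_norm_le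
  set c := 4 * R * ‖w‖ / ε + 2
  refine ⟨htfin.toFinset.card * c ^ 2, fun n s hsK hs => ?_⟩
  have hLn : 1 ≤ L ^ n := one_le_pow₀ hφw
  set h := ε / (2 * ‖w‖ * L ^ n)
  have hh : 0 < h := by positivity
  have hcells : ∀ x ∈ K, gridCell h (φ x) ∈ gridCells h R := fun x hx =>
    gridCell_mem_gridCells hh (hφR _ ⟨x, hx, rfl⟩)
  have hclose : ∀ x ∈ K, ∀ y ∈ K, gridCell h (φ x) = gridCell h (φ y) →
      ∀ i, 0 < i → i < n → dist ((φ.smulRight w)^[i] x) ((φ.smulRight w)^[i] y) ≤ ε := by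
    rintro x - y - hxy (_ | j) hj hjn
    · exact (lt_irrefl 0 hj).elim
    rw [dist_smulRight_iterate_succ]
    calc L ^ j * ‖φ x - φ y‖ * ‖w‖ ≤ L ^ n * (2 * h) * ‖w‖ := by
          gcongr
          · omega
          · exact (norm_sub_lt_of_gridCell_eq hh hxy).le
      _ = ε := by simp only [h]; field_simp
  have hcard := hs.card_le_card_mul_card ht hcells hclose hsK
  calc (s.card : ℝ) ≤ htfin.toFinset.card * (gridCells h R).card := by exact_mod_cast hcard
    _ ≤ htfin.toFinset.card * (2 * R / h + 2) ^ 2 := by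
        gcongr; exact card_gridCells_le hh hR.le
    _ ≤ htfin.toFinset.card * (c * L ^ n) ^ 2 := by
        gcongr
        calc 2 * R / h + 2 = 4 * R * ‖w‖ / ε * L ^ n + 2 := by simp only [h]; field_simp; ring
          _ ≤ 4 * R * ‖w‖ / ε * L ^ n + 2 * L ^ n := by gcongr; linarith
          _ = c * L ^ n := by ring
    _ = htfin.toFinset.card * c ^ 2 * (L ^ 2) ^ n := by ring

lemma exists_isSep_smulRight (hφw : 1 ≤ ‖φ w‖) (n : ℕ) :
    ∃ s : Finset E, ↑s ⊆ (· • w) '' Metric.closedBall (0 : ℂ) 1 ∧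
      IsSep (φ.smulRight w) (n + 1) (‖w‖ / 2) s ∧ ‖φ w‖ ^ n ≤ s.card := by
  classical
  have hφw0 : φ w ≠ 0 := norm_pos_iff.1 (by linarith)
  have hw : w ≠ 0 := fun h => hφw0 (by simp [h])
  have hLn : 0 < ‖φ w‖ ^ n := by positivity
  set pt : ℕ → E := fun k => ((k : ℂ) / φ w ^ n) • w
  have hpt : ∀ k, (φ.smulRight w)^[n] (pt k) = (k : ℂ) • w := fun k => by
    rw [smulRight_iterate_smul, mul_div_cancel₀ _ (pow_ne_zero n hφw0)]
  have hinj : Function.Injective pt := fun k l hkl => by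
    have := hpt k
    rw [hkl, hpt l] at this
    exact_mod_cast (smul_left_injective ℂ hw this).symm
  set N := ⌊‖φ w‖ ^ n⌋₊ + 1
  refine ⟨(Finset.range N).image pt, ?_, ?_, ?_⟩
  · rw [Finset.coe_image]
    rintro - ⟨k, hk, rfl⟩
    refine ⟨_, ?_, rfl⟩
    have hk : (k : ℝ) ≤ ‖φ w‖ ^ n :=
      (Nat.cast_le.2 (Nat.lt_succ_iff.1 (Finset.mem_range.1 hk))).trans
        (Nat.floor_le hLn.le)
    rw [Metric.mem_closedBall, dist_zero_right, norm_div, norm_pow, Complex.norm_natCast]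
    exact div_le_one_of_le₀ hk hLn.le
  · simp only [IsSep, Finset.mem_image]
    rintro - ⟨k, -, rfl⟩ - ⟨l, -, rfl⟩ hkl
    have hkl : k ≠ l := fun h => hkl (h ▸ rfl)
    refine ⟨n, n.lt_succ_self, ?_⟩
    rw [hpt, hpt, dist_eq_norm, ← sub_smul, norm_smul]
    have : (1 : ℝ) ≤ ‖(k : ℂ) - l‖ := by
      rw [show (k : ℂ) - l = ((k - l : ℤ) : ℂ) by push_cast; ring, Complex.norm_intCast]
      exact_mod_cast Int.one_le_abs (show (k : ℤ) - l ≠ 0 by omega)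
    nlinarith [norm_pos_iff.2 hw]
  · rw [Finset.card_image_of_injective _ hinj, Finset.card_range]
    exact_mod_cast (Nat.lt_floor_add_one _).le

lemma entBowen_smulRight_le (hφw : 1 ≤ ‖φ w‖) :
    entBowen (φ.smulRight w) ≤ (Real.log (‖φ w‖ ^ 2) : EReal) :=
  entBowen_le fun _K hK _ε hε =>
    let ⟨_P, hP⟩ := card_isSep_smulRight_le φ w hφw hK hε
    limsup_log_div_le_of_le_mul_pow (one_le_pow₀ hφw) fun n => sepNum_le (hP n)

lemma log_norm_le_entBowen_smulRight (hφw : 1 ≤ ‖φ w‖) :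
    (Real.log ‖φ w‖ : EReal) ≤ entBowen (φ.smulRight w) := by
  set K := (· • w) '' Metric.closedBall (0 : ℂ) 1
  have hK : IsCompact K := (isCompact_closedBall 0 1).image (continuous_id.smul continuous_const)
  have hw : 0 < ‖w‖ / 2 := half_pos (norm_pos_iff.2 fun h => by simp [h] at hφw; linarith)
  obtain ⟨P, hP⟩ := card_isSep_smulRight_le φ w hφw hK hw
  have hgrowth : ∀ n, ‖φ w‖⁻¹ * ‖φ w‖ ^ (n + 1) ≤ sepNum (φ.smulRight w) K (n + 1) (‖w‖ / 2) :=
    fun n => by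
      obtain ⟨s, hsK, hs, hcard⟩ := exists_isSep_smulRight φ w hφw n
      rw [pow_succ', inv_mul_cancel_left₀ (by positivity)]
      exact hcard.trans (by exact_mod_cast card_le_sepNum (hP _) hsK hs)
  refine (log_le_limsup_log_div_of_mul_pow_le (c := ‖φ w‖⁻¹) (by positivity) (by positivity)
    ?_).trans (le_entBowen hK hw)
  filter_upwards [eventually_ge_atTop 1] with n hn
  obtain ⟨m, rfl⟩ := Nat.exists_eq_add_of_le' hn
  exact hgrowth m

lemma isCompactOperator_smulRight : IsCompactOperator (φ.smulRight w) :=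
  (isCompactOperator_of_locallyCompactSpace_dom φ).continuous_comp
    (continuous_id.smul continuous_const)

end RankOneEntropy

lemma ContinuousLinearMap.not_dense_orbit_of_comp_eq_zero {𝕜 E : Type*}
    [NontriviallyNormedField 𝕜] [NormedAddCommGroup E] [NormedSpace 𝕜 E] {T : E →L[𝕜] E}
    {ψ : E →L[𝕜] 𝕜} (hψ : ψ ≠ 0) (hψT : ψ.comp T = 0) (x : E) :
    ¬ Dense (Set.range fun n : ℕ => (T ^ n) x) := by
  intro hdense
  obtain ⟨y, hy⟩ := DFunLike.ne_iff.1 hψ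
  have : Nontrivial E := nontrivial_of_ne y 0 fun h => hy (by simp [h])
  have : NeBot (𝓝[≠] x) := Module.punctured_nhds_neBot 𝕜 E x
  have horbit : Set.range (fun n : ℕ => (T ^ n) x) \ {x} ⊆ {y | ψ y = 0} := by
    rintro - ⟨⟨_ | n, rfl⟩, hne⟩
    · exact absurd rfl hne
    · change ψ ((T ^ (n + 1)) x) = 0
      rw [pow_succ', mul_apply_eq_comp, ← comp_apply, hψT, zero_apply]
  have hker : {y | ψ y = 0} = Set.univ :=
    (isClosed_eq ψ.continuous continuous_const).closure_eq ▸
      (Dense.mono horbit (hdense.sdiff_singleton x)).closure_eq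
  exact hy (Set.eq_univ_iff_forall.1 hker y)

theorem compact_operator_with_large_finite_entropy (C : ℝ) (hC : 0 < C) :
    ∃ T : lp (fun _ : ℕ => ℂ) 2 →L[ℂ] lp (fun _ : ℕ => ℂ) 2,
      IsCompactOperator T ∧
      (C : EReal) < entBowen (fun x => T x) ∧
      entBowen (fun x => T x) < ⊤ ∧
      ∀ x : lp (fun _ : ℕ => ℂ) 2, ¬ Dense (Set.range fun n : ℕ => (T ^ n) x) := by
  set coord := lp.evalCLM ℂ (fun _ : ℕ => ℂ) 2
  set w : lp (fun _ : ℕ => ℂ) 2 := lp.single 2 0 (Real.exp (C + 1) : ℂ)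
  have hcoord : ∀ i (x : lp (fun _ : ℕ => ℂ) 2), coord i x = x i := fun _ _ => rfl
  have hφw : ‖coord 0 w‖ = Real.exp (C + 1) := by
    rw [hcoord, lp.single_apply_self, Complex.norm_real, Real.norm_of_nonneg (Real.exp_pos _).le]
  have hφw1 : 1 ≤ ‖coord 0 w‖ := hφw ▸ Real.one_le_exp (by linarith)
  refine ⟨(coord 0).smulRight w, isCompactOperator_smulRight _ _, ?_,
    (entBowen_smulRight_le _ _ hφw1).trans_lt (EReal.coe_lt_top _),
    (coord 0).smulRight w |>.not_dense_orbit_of_comp_eq_zero (ψ := coord 1) ?_ ?_⟩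
  · calc (C : EReal) < (Real.log ‖coord 0 w‖ : EReal) := by
          rw [hφw, Real.log_exp]; exact EReal.coe_lt_coe_iff.2 (by linarith)
      _ ≤ _ := log_norm_le_entBowen_smulRight _ _ hφw1
  · refine fun h => one_ne_zero (α := ℂ) ?_
    simpa [hcoord] using congr($h (lp.single 2 1 1))
  · ext y
    simp [hcoord, w]
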